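/- arXiv:1102.1441 — 2 statements merged into one kernel-verified Lean document; each statement's English description precedes it below -/
import Mathlib

section
/- (Removing the integer bit from the 2-state UPG.) Work with probability vectors on 2 states {0,1}; let h = ½·δ_0 + ½·δ_1. For bits r_0, r_1, …, r_n ∈ {0,1} define Z_n(r_0; r_n, …, r_1) recursively by Z_0(r_0) = δ_{1−r_0} and, for n ≥ 1 with b_n = max(r_0, r_n), Z_n(r_0; r_n, …, r_1) = ( Z_{n−1}(r_0; r_{n−1}, …, r_1) ∗ (δ_{1−b_n} ⊕ h) ) ⊕ ( δ_{1−b_n} ∗ h ). Define Z′_n(r_n, …, r_1) by Z′_0 = δ_1 and, for n ≥ 1, Z′_n(r_n, …, r_1) = ( Z′_{n−1}(r_{n−1}, …, r_1) ∗ (δ_{1−r_n} ⊕ h) ) ⊕ ( δ_{1−r_n} ∗ h ). Then for all n ≥ 0 and all bits r_0, r_1, …, r_n, Z_n(r_0; r_n, …, r_1) = δ_{1−r_0} ∗ Z′_n(r_n, …, r_1); in particular, Z′_n(r_n, …, r_1) assigns probability (∑_{i=1}^{n} r_i·2^{i−1}) / 2^n to state 0. -/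
/-
On two states, `δ₁` is a unit and `δ₀` is absorbing for series composition `∗`, and dually for
parallel composition `⊕`. Hence a step of `Z′` is `Z′ ⊕ h` when the bit is `0` (the mass on state `0`
is halved) and `Z′ ∗ h` when it is `1` (the mass `x` on state `0` becomes `(1 + x) / 2`): this is
reading the bits off as a binary fraction. For `Z`, the bit `r₀ = 0` leaves exactly the recursion
of `Z′`, while `r₀ = 1` makes every step absorb into `δ₀`, which is also `δ₀ ∗ Z′`.
-/

noncomputable section

/-- Series composition: distribution of `min` of two independent states. -/
def smin {N : ℕ} (p q : Fin N → ℝ) : Fin N → ℝ :=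
  fun k => ∑ i, ∑ j, if min i j = k then p i * q j else 0

/-- Parallel composition: distribution of `max` of two independent states. -/
def smax {N : ℕ} (p q : Fin N → ℝ) : Fin N → ℝ :=
  fun k => ∑ i, ∑ j, if max i j = k then p i * q j else 0

/-- The point mass at state `s`. -/
def delta {N : ℕ} (s : Fin N) : Fin N → ℝ := fun i => if i = s then 1 else 0

/-- The fair 2-state pswitch `h = ½·δ₀ + ½·δ₁`. -/
def hB : Fin 2 → ℝ := fun i => (1 / 2) * delta (0 : Fin 2) i + (1 / 2) * delta (1 : Fin 2) i

/-- The reduced 2-state UPG `Z_n(r₀; r_n, …, r₁)`: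
`Z₀(r₀) = δ_{1-r₀}`; for `n ≥ 1`, with `b_n = max(r₀, r_n)`,
`Z_n = (Z_{n-1} ∗ (δ_{1-b_n} ⊕ h)) ⊕ (δ_{1-b_n} ∗ h)`. -/
def Z (r : ℕ → Fin 2) : ℕ → (Fin 2 → ℝ)
  | 0 => delta (1 - r 0)
  | n + 1 =>
    smax (smin (Z r n) (smax (delta (1 - max (r 0) (r (n + 1)))) hB))
      (smin (delta (1 - max (r 0) (r (n + 1)))) hB)

/-- The 2-state UPG with the integer bit removed, `Z′_n(r_n, …, r₁)`:
`Z′₀ = δ₁`; for `n ≥ 1`,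
`Z′_n = (Z′_{n-1} ∗ (δ_{1-r_n} ⊕ h)) ⊕ (δ_{1-r_n} ∗ h)`. -/
def Z' (r : ℕ → Fin 2) : ℕ → (Fin 2 → ℝ)
  | 0 => delta (1 : Fin 2)
  | n + 1 =>
    smax (smin (Z' r n) (smax (delta (1 - r (n + 1))) hB))
      (smin (delta (1 - r (n + 1))) hB)

section Composition

variable {N : ℕ}

theorem smin_delta_apply (s : Fin N) (p : Fin N → ℝ) (k : Fin N) :
    smin (delta s) p k = ∑ j, if min s j = k then p j else 0 := by
  simp only [smin, delta]
  rw [Fintype.sum_eq_single s fun i hi => by simp [hi]]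
  simp

theorem smax_delta_apply (s : Fin N) (p : Fin N → ℝ) (k : Fin N) :
    smax (delta s) p k = ∑ j, if max s j = k then p j else 0 := by
  simp only [smax, delta]
  rw [Fintype.sum_eq_single s fun i hi => by simp [hi]]
  simp

theorem smin_delta_of_isTop {s : Fin N} (hs : IsTop s) (p : Fin N → ℝ) :
    smin (delta s) p = p := by
  funext k
  simp [smin_delta_apply, min_eq_right (hs _)]

theorem smax_delta_of_isBot {s : Fin N} (hs : IsBot s) (p : Fin N → ℝ) :
    smax (delta s) p = p := by
  funext k
  simp [smax_delta_apply, max_eq_right (hs _)]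

theorem smin_delta_of_isBot {s : Fin N} (hs : IsBot s) {p : Fin N → ℝ} (hp : ∑ i, p i = 1) :
    smin (delta s) p = delta s := by
  funext k
  simp [smin_delta_apply, min_eq_left (hs _), delta, hp, eq_comm]

theorem smax_delta_of_isTop {s : Fin N} (hs : IsTop s) {p : Fin N → ℝ} (hp : ∑ i, p i = 1) :
    smax (delta s) p = delta s := by
  funext k
  simp [smax_delta_apply, max_eq_left (hs _), delta, hp, eq_comm]

theorem sum_delta (s : Fin N) : ∑ i, delta s i = 1 := by
  simp [delta]

theorem sum_smin (p q : Fin N → ℝ) : ∑ k, smin p q k = (∑ i, p i) * ∑ j, q j := by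
  simp only [smin, Finset.sum_mul_sum]
  rw [Finset.sum_comm]
  refine Finset.sum_congr rfl fun i _ => ?_
  rw [Finset.sum_comm]
  simp

theorem sum_smax (p q : Fin N → ℝ) : ∑ k, smax p q k = (∑ i, p i) * ∑ j, q j := by
  simp only [smax, Finset.sum_mul_sum]
  rw [Finset.sum_comm]
  refine Finset.sum_congr rfl fun i _ => ?_
  rw [Finset.sum_comm]
  simp

theorem smin_comm (p q : Fin N → ℝ) : smin p q = smin q p := by
  funext k
  simp only [smin]
  rw [Finset.sum_comm]
  simp only [min_comm, mul_comm]

theorem smax_comm (p q : Fin N → ℝ) : smax p q = smax q p := by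
  funext k
  simp only [smax]
  rw [Finset.sum_comm]
  simp only [max_comm, mul_comm]

end Composition

theorem Fin.isBot_zero_two : IsBot (0 : Fin 2) := fun i => Fin.zero_le i

theorem Fin.isTop_one_two : IsTop (1 : Fin 2) := fun i => Fin.le_last i

theorem sum_hB : ∑ i, hB i = 1 := by
  norm_num [hB, delta, Fin.sum_univ_two]

theorem smax_hB_apply_zero (p : Fin 2 → ℝ) : smax p hB 0 = p 0 / 2 := by
  simp [smax, hB, delta, Fin.sum_univ_two, div_eq_mul_inv]

theorem smin_hB_apply_zero {p : Fin 2 → ℝ} (hp : ∑ i, p i = 1) :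
    smin p hB 0 = (1 + p 0) / 2 := by
  rw [Fin.sum_univ_two] at hp
  simp only [smin, hB, delta, Fin.sum_univ_two]
  grind

section UPG

variable (r : ℕ → Fin 2)

theorem Z'_succ_of_eq_zero {n : ℕ} (h : r (n + 1) = 0) : Z' r (n + 1) = smax (Z' r n) hB := by
  rw [Z', h, sub_zero, smax_delta_of_isTop Fin.isTop_one_two sum_hB,
    smin_delta_of_isTop Fin.isTop_one_two, smin_comm, smin_delta_of_isTop Fin.isTop_one_two]

theorem Z'_succ_of_eq_one {n : ℕ} (h : r (n + 1) = 1) : Z' r (n + 1) = smin (Z' r n) hB := by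
  rw [Z', h, sub_self, smax_delta_of_isBot Fin.isBot_zero_two,
    smin_delta_of_isBot Fin.isBot_zero_two sum_hB, smax_comm, smax_delta_of_isBot Fin.isBot_zero_two]

theorem sum_Z' (n : ℕ) : ∑ i, Z' r n i = 1 := by
  induction n with
  | zero => exact sum_delta 1
  | succ n ih =>
    obtain h | h : r (n + 1) = 0 ∨ r (n + 1) = 1 := by omega
    · rw [Z'_succ_of_eq_zero r h, sum_smax, ih, sum_hB, one_mul]
    · rw [Z'_succ_of_eq_one r h, sum_smin, ih, sum_hB, one_mul]

theorem Z'_apply_zero (n : ℕ) :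
    Z' r n 0 = (∑ i ∈ Finset.Icc 1 n, ((r i : ℕ) : ℝ) * 2 ^ (i - 1)) / 2 ^ n := by
  induction n with
  | zero => simp [Z', delta]
  | succ n ih =>
    rw [Finset.sum_Icc_succ_top (by omega), pow_succ, add_tsub_cancel_right]
    obtain h | h : r (n + 1) = 0 ∨ r (n + 1) = 1 := by omega
    · rw [Z'_succ_of_eq_zero r h, smax_hB_apply_zero, ih, h, Fin.val_zero, Nat.cast_zero,
        zero_mul, add_zero, div_div]
    · rw [Z'_succ_of_eq_one r h, smin_hB_apply_zero (sum_Z' r n), ih, h, Fin.val_one,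
        Nat.cast_one, one_mul]
      field_simp
      ring

theorem Z_eq_Z'_of_eq_zero (h : r 0 = 0) (n : ℕ) : Z r n = Z' r n := by
  induction n with
  | zero => rw [Z, Z', h, sub_zero]
  | succ n ih => rw [Z, Z', ih, h, max_eq_right (Fin.isBot_zero_two _)]

theorem Z_eq_delta_zero_of_eq_one (h : r 0 = 1) (n : ℕ) : Z r n = delta 0 := by
  induction n with
  | zero => rw [Z, h, sub_self]
  | succ n ih =>
    rw [Z, ih, h, max_eq_left (Fin.isTop_one_two _), sub_self,
      smax_delta_of_isBot Fin.isBot_zero_two, smin_delta_of_isBot Fin.isBot_zero_two sum_hB,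
      smax_delta_of_isBot Fin.isBot_zero_two]

end UPG

/-- Removing the integer bit from the 2-state UPG: `Z_n = δ_{1-r₀} ∗ Z′_n` for
all bits; in particular `Z′_n` assigns probability `(∑_{i=1}^n r_i·2^{i-1})/2ⁿ`
to state `0`. -/
theorem upg2_remove_bit (n : ℕ) (r : ℕ → Fin 2) :
    Z r n = smin (delta (1 - r 0)) (Z' r n) ∧
    Z' r n 0 = (∑ i ∈ Finset.Icc 1 n, ((r i : ℕ) : ℝ) * 2 ^ (i - 1)) / 2 ^ n := by
  refine ⟨?_, Z'_apply_zero r n⟩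
  obtain h | h : r 0 = 0 ∨ r 0 = 1 := by omega
  · rw [Z_eq_Z'_of_eq_zero r h, h, sub_zero, smin_delta_of_isTop Fin.isTop_one_two]
  · rw [Z_eq_delta_zero_of_eq_one r h, h, sub_self,
      smin_delta_of_isBot Fin.isBot_zero_two (sum_Z' r n)]
end
end

section
/- (Partial order inexpressibility.) Let L = Bool × Bool with the componentwise order, so L is the four-element diamond lattice with bottom ⊥ = (false,false), top ⊤ = (true,true), and incomparable middle elements a = (false,true) and b = (true,false); meet ⊓ and join ⊔ are componentwise. For probability vectors x, y on L define the series composition (x∗y) k = ∑ over pairs (i,j) with i ⊓ j = k of x i · y j, and the parallel composition (x⊕y) k = ∑ over pairs (i,j) with i ⊔ j = k of x i · y j. (i) If v is a probability vector on L with v ⊥ = 0 and v ⊤ = 0, and v = x∗y for probability vectors x, y, then x = v or y = v; likewise, if v = x⊕y then x = v or y = v. (ii) Consequently, for any real p with 0 < p < 1, the probability vector v with v a = 1−p, v b = p, v ⊥ = v ⊤ = 0 does not lie in the inductive closure under ∗ and ⊕ of the point masses together with any switch set S of probability vectors on L, unless v ∈ S. -/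
noncomputable section

/-- The diamond lattice: `Bool × Bool` with the componentwise order.
Bottom is `(false, false)`, top is `(true, true)`, and `(false, true)`,
`(true, false)` are the incomparable middle elements. -/
abbrev Diamond := Bool × Bool

/-- Series composition on the lattice: distribution of the meet `⊓` of two
independent states. -/
def lser (x y : Diamond → ℝ) : Diamond → ℝ :=
  fun k => ∑ i, ∑ j, if i ⊓ j = k then x i * y j else 0

/-- Parallel composition on the lattice: distribution of the join `⊔` of two
independent states. -/
def lpar (x y : Diamond → ℝ) : Diamond → ℝ :=
  fun k => ∑ i, ∑ j, if i ⊔ j = k then x i * y j else 0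

/-- A probability vector on the lattice. -/
def IsProbVecL (x : Diamond → ℝ) : Prop :=
  (∀ i, 0 ≤ x i) ∧ ∑ i, x i = 1

/-- The point mass at lattice element `s`. -/
def ldelta (s : Diamond) : Diamond → ℝ := fun i => if i = s then 1 else 0

/-- The inductive closure under series and parallel composition of the point
masses together with a switch set `S`. -/
inductive LClosure (S : Set (Diamond → ℝ)) : (Diamond → ℝ) → Prop
  | point (s : Diamond) : LClosure S (ldelta s)
  | mem {v : Diamond → ℝ} : v ∈ S → LClosure S v
  | series {x y : Diamond → ℝ} : LClosure S x → LClosure S y → LClosure S (lser x y)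
  | parallel {x y : Diamond → ℝ} : LClosure S x → LClosure S y → LClosure S (lpar x y)

/-!
Complement is an order-reversing involution of the diamond, so `⊕` is `∗` conjugated by
complement and only `∗` needs an argument. Since `(x ∗ y) ⊤ = x ⊤ * y ⊤`, one factor, say `x`,
has no mass at `⊤`. If `(x ∗ y) ⊥ = 0`, then `x i * y j = 0` whenever `i ⊓ j = ⊥`; in
particular `x ⊥ = 0`. So `x` lives on the two atoms, and an atom `i` meets every `j` with
`x i * y j ≠ 0` in `i` itself, whence `x ∗ y = x`. For (ii), `v` is not a point mass, and by
(i) every composition equal to `v` has a factor equal to `v`, so induction on the closure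
ends in `S`.
-/

lemma lser_comm (x y : Diamond → ℝ) : lser x y = lser y x := by
  funext k
  rw [lser, Finset.sum_comm]
  simp only [lser, inf_comm, mul_comm]

lemma lser_comp_compl (x y : Diamond → ℝ) :
    lser (x ∘ compl) (y ∘ compl) = lpar x y ∘ compl := by
  funext k
  let e : Diamond ≃ Diamond := compl_involutive.toPerm
  simp only [lser, lpar, Function.comp_apply]
  rw [← e.sum_comp]
  refine Finset.sum_congr rfl fun i _ => ?_
  rw [← e.sum_comp]
  refine Finset.sum_congr rfl fun j _ => ?_
  simp [e, ← compl_sup, compl_eq_comm, @eq_comm _ kᶜ]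

lemma lser_apply_top (x y : Diamond → ℝ) : lser x y ⊤ = x ⊤ * y ⊤ := by
  simp [lser, inf_eq_top_iff, ite_and]

namespace IsProbVecL

variable {x y : Diamond → ℝ}

lemma comp_compl (hx : IsProbVecL x) : IsProbVecL (x ∘ compl) :=
  ⟨fun i => hx.1 iᶜ, Equiv.sum_comp (compl_involutive.toPerm _) x ▸ hx.2⟩

lemma lser (hx : IsProbVecL x) (hy : IsProbVecL y) : IsProbVecL (lser x y) := by
  refine ⟨fun k => Finset.sum_nonneg fun i _ => Finset.sum_nonneg fun j _ =>
    ite_nonneg (mul_nonneg (hx.1 i) (hy.1 j)) le_rfl, ?_⟩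
  calc ∑ k, _root_.lser x y k = ∑ i, ∑ j, x i * y j := by
        simp only [_root_.lser]
        rw [Finset.sum_comm]
        refine Finset.sum_congr rfl fun i _ => ?_
        rw [Finset.sum_comm]
        simp
    _ = 1 := by rw [← Finset.sum_mul_sum, hx.2, hy.2, one_mul]

lemma lpar (hx : IsProbVecL x) (hy : IsProbVecL y) : IsProbVecL (lpar x y) := by
  have h := (hx.comp_compl.lser hy.comp_compl).comp_compl
  rwa [lser_comp_compl, Function.comp_assoc, compl_involutive.comp_self,
    Function.comp_id] at h

end IsProbVecL

lemma isProbVecL_ldelta (s : Diamond) : IsProbVecL (ldelta s) :=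
  ⟨fun i => by unfold ldelta; split_ifs <;> norm_num, by simp [ldelta]⟩

lemma LClosure.isProbVecL {S : Set (Diamond → ℝ)} (hS : ∀ w ∈ S, IsProbVecL w)
    {w : Diamond → ℝ} (h : LClosure S w) : IsProbVecL w := by
  induction h with
  | point s => exact isProbVecL_ldelta s
  | mem hw => exact hS _ hw
  | series _ _ ihx ihy => exact ihx.lser ihy
  | parallel _ _ ihx ihy => exact ihx.lpar ihy

section Series

variable {x y : Diamond → ℝ}

lemma mul_eq_zero_of_lser_apply_bot_eq_zero (hx : ∀ i, 0 ≤ x i) (hy : ∀ j, 0 ≤ y j)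
    (h : lser x y ⊥ = 0) {i j : Diamond} (hij : i ⊓ j = ⊥) : x i * y j = 0 := by
  have hterm : ∀ i j, 0 ≤ if i ⊓ j = ⊥ then x i * y j else 0 := fun i j =>
    ite_nonneg (mul_nonneg (hx i) (hy j)) le_rfl
  have hrow := (Finset.sum_eq_zero_iff_of_nonneg fun i _ =>
    Finset.sum_nonneg fun j _ => hterm i j).1 h i (Finset.mem_univ i)
  have := (Finset.sum_eq_zero_iff_of_nonneg fun j _ => hterm i j).1 hrow j (Finset.mem_univ j)
  rwa [if_pos hij] at this

lemma lser_eq_left (hy : ∑ j, y j = 1) (h : ∀ i j, x i * y j ≠ 0 → i ⊓ j = i) :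
    lser x y = x := by
  funext k
  calc lser x y k = ∑ i, ∑ j, if i = k then x i * y j else 0 := by
        refine Finset.sum_congr rfl fun i _ => Finset.sum_congr rfl fun j _ => ?_
        by_cases hij : x i * y j = 0
        · simp [hij]
        · rw [h i j hij]
    _ = x k := by simp [← Finset.mul_sum, hy]

lemma Diamond.inf_eq_left_of_ne_bot {i j : Diamond} (hbot : i ≠ ⊥) (htop : i ≠ ⊤)
    (h : i ⊓ j ≠ ⊥) : i ⊓ j = i := by
  revert i j
  decide

lemma left_eq_lser_of_apply_top_eq_zero (hx : IsProbVecL x) (hy : IsProbVecL y)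
    (hbot : lser x y ⊥ = 0) (htop : x ⊤ = 0) : x = lser x y := by
  have hzero {i j : Diamond} : i ⊓ j = ⊥ → x i * y j = 0 :=
    mul_eq_zero_of_lser_apply_bot_eq_zero hx.1 hy.1 hbot
  have hxbot : x ⊥ = 0 :=
    calc x ⊥ = ∑ j, x ⊥ * y j := by rw [← Finset.mul_sum, hy.2, mul_one]
      _ = 0 := Finset.sum_eq_zero fun j _ => hzero (bot_inf_eq j)
  refine (lser_eq_left hy.2 fun i j hij => Diamond.inf_eq_left_of_ne_bot ?_ ?_ ?_).symm
  · rintro rfl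
    exact hij (by rw [hxbot, zero_mul])
  · rintro rfl
    exact hij (by rw [htop, zero_mul])
  · exact fun h => hij (hzero h)

theorem eq_lser_or_eq_lser (hx : IsProbVecL x) (hy : IsProbVecL y)
    (hbot : lser x y ⊥ = 0) (htop : lser x y ⊤ = 0) : x = lser x y ∨ y = lser x y := by
  rcases mul_eq_zero.1 ((lser_apply_top x y).symm.trans htop) with hx0 | hy0
  · exact .inl (left_eq_lser_of_apply_top_eq_zero hx hy hbot hx0)
  · rw [lser_comm] at hbot ⊢
    exact .inr (left_eq_lser_of_apply_top_eq_zero hy hx hbot hy0)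

end Series

theorem eq_lpar_or_eq_lpar {x y : Diamond → ℝ} (hx : IsProbVecL x) (hy : IsProbVecL y)
    (hbot : lpar x y ⊥ = 0) (htop : lpar x y ⊤ = 0) : x = lpar x y ∨ y = lpar x y := by
  have hdual := eq_lser_or_eq_lser hx.comp_compl hy.comp_compl
    (by simpa [lser_comp_compl] using htop) (by simpa [lser_comp_compl] using hbot)
  rw [lser_comp_compl] at hdual
  exact hdual.imp (compl_surjective.injective_comp_right ·) (compl_surjective.injective_comp_right ·)

theorem LClosure.mem_of_apply_bot_eq_zero_of_apply_top_eq_zero {S : Set (Diamond → ℝ)}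
    (hS : ∀ w ∈ S, IsProbVecL w) {v : Diamond → ℝ} (hbot : v ⊥ = 0) (htop : v ⊤ = 0)
    (hδ : ∀ s, ldelta s ≠ v) (h : LClosure S v) : v ∈ S := by
  suffices ∀ w, LClosure S w → w = v → v ∈ S from this v h rfl
  intro w hw
  induction hw with
  | point s => exact fun h => absurd h (hδ s)
  | mem hw => exact fun h => h ▸ hw
  | series hx hy ihx ihy =>
    rintro rfl
    exact (eq_lser_or_eq_lser (hx.isProbVecL hS) (hy.isProbVecL hS) hbot htop).elim ihx ihy
  | parallel hx hy ihx ihy =>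
    rintro rfl
    exact (eq_lpar_or_eq_lpar (hx.isProbVecL hS) (hy.isProbVecL hS) hbot htop).elim ihx ihy

/-- Partial order inexpressibility. (i) A probability vector supported on the
two incomparable middle elements can only arise as a series or parallel
composition if one of the factors is the vector itself. (ii) Consequently, for
`0 < p < 1`, the vector `(0, 1-p, p, 0)` is not in the inductive closure of the
point masses together with a switch set `S` unless it belongs to `S`. -/
theorem partial_order_inexpressibility :
    (∀ v x y : Diamond → ℝ, IsProbVecL v → IsProbVecL x → IsProbVecL y →
      v (false, false) = 0 → v (true, true) = 0 →
      ((v = lser x y → x = v ∨ y = v) ∧ (v = lpar x y → x = v ∨ y = v))) ∧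
    (∀ S : Set (Diamond → ℝ), (∀ w ∈ S, IsProbVecL w) →
      ∀ p : ℝ, 0 < p → p < 1 →
      ∀ v : Diamond → ℝ,
        v = (fun i => if i = (false, true) then 1 - p
              else if i = (true, false) then p else 0) →
        LClosure S v → v ∈ S) := by
  refine ⟨fun v x y _ hx hy hbot htop => ⟨?_, ?_⟩, fun S hS p hp0 hp1 v hv hcl => ?_⟩
  · rintro rfl
    exact eq_lser_or_eq_lser hx hy hbot htop
  · rintro rfl
    exact eq_lpar_or_eq_lpar hx hy hbot htop
  refine hcl.mem_of_apply_bot_eq_zero_of_apply_top_eq_zero hS (by simp [hv, Prod.ext_iff])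
    (by simp [hv, Prod.ext_iff]) ?_
  rintro s rfl
  have ha := congrFun hv (false, true)
  have hb := congrFun hv (true, false)
  rcases s with ⟨_ | _, _ | _⟩ <;> simp [ldelta] at ha hb <;> linarith
end
end
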